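/- Let G = (X, Y, E) be a chain graph without isolated vertices and let S = (v_1, ..., v_p) be a Grundy dominating sequence of G containing vertices from both X and Y. If v_1 ∈ Y_1 (the open-twin class of Y whose vertices are adjacent to all of X), then γ_gr(G) = |Y|, and consequently listing the vertices of Y in reverse chain order yields a Grundy dominating sequence contained entirely in Y. -/

import Mathlib

/-! Since the head `v₁` dominates `X ∪ {v₁}`, every later vertex of `S` must footprint a vertex
of `Y ∖ {v₁}`; footprints are distinct, so `|S| ≤ |Y|`. Conversely `Y` is independent and, as
`G` has no isolated vertices, dominating, so any listing of `Y` is a dominating sequence. -/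

open Finset

variable {V : Type*}

/-- The closed neighborhood of a vertex. -/
def CN (G : SimpleGraph V) (v : V) : Set V := insert v (G.neighborSet v)

/-- A closed neighborhood (legal) sequence: distinct vertices, each footprinting
a vertex not dominated by the closed neighborhoods of earlier vertices. -/
def IsCNSeq (G : SimpleGraph V) (S : List V) : Prop :=
  S.Nodup ∧ ∀ i : Fin S.length, ∃ u, u ∈ CN G (S.get i) ∧
    ∀ j : Fin S.length, j < i → u ∉ CN G (S.get j)

/-- A dominating sequence: a closed neighborhood sequence whose vertex set dominates. -/
def IsDomSeq (G : SimpleGraph V) (S : List V) : Prop :=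
  IsCNSeq G S ∧ ∀ v : V, ∃ u ∈ S, v ∈ CN G u

/-- The Grundy domination number: the maximum length of a dominating sequence. -/
noncomputable def grundyDom (G : SimpleGraph V) : ℕ :=
  sSup {n | ∃ S : List V, IsDomSeq G S ∧ S.length = n}

section

variable (G : SimpleGraph V)

lemma mem_CN_iff {v u : V} : u ∈ CN G v ↔ u = v ∨ G.Adj v u := by
  simp [CN, SimpleGraph.mem_neighborSet]

lemma self_mem_CN (v : V) : v ∈ CN G v := (mem_CN_iff G).2 (Or.inl rfl)

variable {G}

lemma IsCNSeq.exists_injective_footprint {S : List V} (hS : IsCNSeq G S) :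
    ∃ f : Fin S.length → V, Function.Injective f ∧
      ∀ i, f i ∈ CN G (S.get i) ∧ ∀ j < i, f i ∉ CN G (S.get j) := by
  choose f hf using hS.2
  refine ⟨f, fun i j hij => ?_, hf⟩
  by_contra hne
  rcases lt_or_gt_of_ne hne with h | h
  · exact (hf j).2 i h (hij ▸ (hf i).1)
  · exact (hf i).2 j h (hij ▸ (hf j).1)

lemma IsCNSeq.length_le_card_add_one {v : V} {S : List V} (hS : IsCNSeq G (v :: S))
    (T : Finset V) (hT : ∀ u, u ∉ CN G v → u ∈ T) : (v :: S).length ≤ T.card + 1 := by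
  obtain ⟨f, hf_inj, hf⟩ := hS.exists_injective_footprint
  have hmaps : ∀ i : Fin S.length, f i.succ ∈ T := fun i =>
    hT _ ((hf i.succ).2 0 i.succ_pos)
  have : S.length ≤ T.card := by
    simpa using Finset.card_le_card_of_injOn (s := univ) (fun i : Fin S.length => f i.succ)
      (fun i _ => hmaps i) ((hf_inj.comp (Fin.succ_injective _)).injOn)
  exact Nat.succ_le_succ this

/-- In an independent set every vertex footprints itself, whatever the order. -/
lemma isDomSeq_of_independent {L : List V} (hnd : L.Nodup)
    (hind : ∀ a ∈ L, ∀ b ∈ L, ¬ G.Adj a b) (hdom : ∀ v, ∃ u ∈ L, v ∈ CN G u) :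
    IsDomSeq G L := by
  refine ⟨⟨hnd, fun i => ⟨L.get i, self_mem_CN G _, fun j hji hmem => ?_⟩⟩, hdom⟩
  rcases (mem_CN_iff G).1 hmem with heq | hadj
  · exact hji.ne' (hnd.get_inj_iff.1 heq)
  · exact hind _ (L.get_mem j) _ (L.get_mem i) hadj

lemma IsDomSeq.length_le_grundyDom [Fintype V] {S : List V} (hS : IsDomSeq G S) :
    S.length ≤ grundyDom G := by
  refine le_csSup ⟨Fintype.card V, ?_⟩ ⟨S, hS, rfl⟩
  rintro n ⟨T, hT, rfl⟩
  exact hT.1.1.length_le_card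

end

theorem chain_grundy_of_head_in_Y1_general {V : Type*} [Fintype V] [DecidableEq V]
    (G : SimpleGraph V) (X Y : Finset V)
    (hcover : X ∪ Y = Finset.univ)
    (hXind : ∀ x ∈ X, ∀ x' ∈ X, ¬ G.Adj x x')
    (hYind : ∀ y ∈ Y, ∀ y' ∈ Y, ¬ G.Adj y y')
    (hiso : ∀ v : V, ∃ u, G.Adj v u)
    (S : List V) (hS : IsDomSeq G S) (hlen : S.length = grundyDom G)
    (hne : S ≠ [])
    (hheadY : S.head hne ∈ Y) (hhead : ∀ x ∈ X, G.Adj (S.head hne) x) :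
    grundyDom G = Y.card ∧
      ∃ S' : List V, IsDomSeq G S' ∧ S'.length = grundyDom G ∧ ∀ v ∈ S', v ∈ Y := by
  have hXY : ∀ v, v ∈ X ∨ v ∈ Y := fun v => Finset.mem_union.1 (hcover ▸ Finset.mem_univ v)
  have hYdom : IsDomSeq G Y.toList := by
    refine isDomSeq_of_independent Y.nodup_toList
      (fun a ha b hb => hYind a (mem_toList.1 ha) b (mem_toList.1 hb)) fun v => ?_
    rcases hXY v with hv | hv
    · obtain ⟨w, hw⟩ := hiso v
      have hwY : w ∈ Y := (hXY w).resolve_left (hXind v hv w · hw)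
      exact ⟨w, mem_toList.2 hwY, (mem_CN_iff G).2 (Or.inr hw.symm)⟩
    · exact ⟨v, mem_toList.2 hv, self_mem_CN G v⟩
  have hge : Y.card ≤ grundyDom G := by simpa using hYdom.length_le_grundyDom
  obtain ⟨v, T, rfl⟩ := List.exists_cons_of_ne_nil hne
  rw [List.head_cons] at hheadY hhead
  have hle : (v :: T).length ≤ Y.card := by
    have := hS.1.length_le_card_add_one (Y.erase v) fun u hu => by
      rw [mem_CN_iff G, not_or] at hu
      exact mem_erase.2 ⟨hu.1, (hXY u).resolve_left fun hx => hu.2 (hhead u hx)⟩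
    rwa [card_erase_add_one hheadY] at this
  have heq : grundyDom G = Y.card := le_antisymm (hlen ▸ hle) hge
  exact ⟨heq, Y.toList, hYdom, by rw [heq, length_toList], fun _ => mem_toList.1⟩

/-- If a Grundy dominating sequence of a chain graph uses vertices from both sides and
its first vertex is adjacent to all of `X` (i.e. lies in `Y_1`), then `γ_gr(G) = |Y|`
and there is a Grundy dominating sequence contained entirely in `Y`. -/
theorem chain_grundy_of_head_in_Y1 {V : Type*} [Fintype V] [DecidableEq V]
    (G : SimpleGraph V) (X Y : Finset V)
    (hXY : Disjoint X Y) (hcover : X ∪ Y = Finset.univ)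
    (hXind : ∀ x ∈ X, ∀ x' ∈ X, ¬ G.Adj x x')
    (hYind : ∀ y ∈ Y, ∀ y' ∈ Y, ¬ G.Adj y y')
    (hchain : ∀ x ∈ X, ∀ x' ∈ X,
      G.neighborSet x ⊆ G.neighborSet x' ∨ G.neighborSet x' ⊆ G.neighborSet x)
    (hiso : ∀ v : V, ∃ u, G.Adj v u)
    (S : List V) (hS : IsDomSeq G S) (hlen : S.length = grundyDom G)
    (hne : S ≠ []) (hbothX : ∃ v ∈ S, v ∈ X) (hbothY : ∃ v ∈ S, v ∈ Y)
    (hheadY : S.head hne ∈ Y) (hhead : ∀ x ∈ X, G.Adj (S.head hne) x) :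
    grundyDom G = Y.card ∧
      ∃ S' : List V, IsDomSeq G S' ∧ S'.length = grundyDom G ∧ ∀ v ∈ S', v ∈ Y :=
  chain_grundy_of_head_in_Y1_general G X Y hcover hXind hYind hiso S hS hlen hne hheadY hhead
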